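/- The product kinematic measure of pairs of lines (l, l*) whose intersection point lies in an area element dx of the plane equals 2π dx; that is, [μ × μ]({(l,l*) : l ∩ l* ∈ A}) = 2π · Area(A) for every Borel set A ⊆ ℝ². -/

import Mathlib

/-!
Reorder the coordinates of a pair of lines as `((φ₁, φ₂), (ρ₁, ρ₂))`. For fixed angles
`φ₁ ≠ φ₂`, the pair `(ρ₁, ρ₂)` of the two lines meeting at `p` depends linearly and bijectively
on `p`, with determinant `sin (φ₁ - φ₂)`; so the admissible `(ρ₁, ρ₂)` form a linear image of
`A` of area `|sin (φ₁ - φ₂)| · Area(A)`. Integrating over `[0, π)²`, where parallel pairs are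
negligible, gives `Area(A) · ∫∫ |sin (φ₁ - φ₂)| = 2π · Area(A)`, because `|sin|` is
`π`-periodic with integral `2` over a period.
-/

open MeasureTheory Real Set

namespace MeasurableEquiv

variable (α β γ δ : Type*) [MeasurableSpace α] [MeasurableSpace β] [MeasurableSpace γ]
  [MeasurableSpace δ]

def prodProdProdComm : (α × β) × γ × δ ≃ᵐ (α × γ) × β × δ where
  toEquiv := Equiv.prodProdProdComm α β γ δ
  measurable_toFun := by
    change Measurable fun x : (α × β) × γ × δ => ((x.1.1, x.2.1), (x.1.2, x.2.2)); fun_prop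
  measurable_invFun := by
    change Measurable fun x : (α × γ) × β × δ => ((x.1.1, x.2.1), (x.1.2, x.2.2)); fun_prop

end MeasurableEquiv

theorem MeasureTheory.measurePreserving_prodProdProdComm {α β γ δ : Type*} [MeasurableSpace α]
    [MeasurableSpace β] [MeasurableSpace γ] [MeasurableSpace δ] (μa : Measure α) (μb : Measure β)
    (μc : Measure γ) (μd : Measure δ) [SFinite μa] [SFinite μb] [SFinite μc] [SFinite μd] :
    MeasurePreserving (MeasurableEquiv.prodProdProdComm α β γ δ)
      ((μa.prod μb).prod (μc.prod μd)) ((μa.prod μc).prod (μb.prod μd)) := by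
  have hid := MeasurePreserving.id μa
  have hswap := (Measure.measurePreserving_swap (μ := μb) (ν := μc)).prod (.id μd)
  exact (measurePreserving_prodAssoc μa μc (μb.prod μd)).symm.comp <|
    (hid.prod (measurePreserving_prodAssoc μc μb μd)).comp <| (hid.prod hswap).comp <|
    (hid.prod (measurePreserving_prodAssoc μb μc μd).symm).comp <|
    measurePreserving_prodAssoc μa μb (μc.prod μd)

/-- `distancePair φ p` is the pair of `ρ`-coordinates of the lines through `p` with angles
`φ.1` and `φ.2`. -/
noncomputable def distancePair (φ : ℝ × ℝ) : (ℝ × ℝ) →ₗ[ℝ] ℝ × ℝ :=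
  Matrix.toLin (Module.Basis.finTwoProd ℝ) (Module.Basis.finTwoProd ℝ)
    !![sin φ.1, cos φ.1; sin φ.2, cos φ.2]

theorem distancePair_apply (φ p : ℝ × ℝ) :
    distancePair φ p = (p.1 * sin φ.1 + p.2 * cos φ.1, p.1 * sin φ.2 + p.2 * cos φ.2) := by
  simp [distancePair, Matrix.toLin_finTwoProd_apply, mul_comm]

theorem det_distancePair (φ : ℝ × ℝ) : LinearMap.det (distancePair φ) = sin (φ.1 - φ.2) := by
  simp [distancePair, LinearMap.det_toLin, Matrix.det_fin_two, sin_sub, mul_comm]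

theorem injective_distancePair {φ : ℝ × ℝ} (h : sin (φ.1 - φ.2) ≠ 0) :
    Function.Injective (distancePair φ) := by
  rw [← det_distancePair] at h
  exact (LinearMap.equivOfDetNeZero _ h).injective

theorem sin_sub_ne_zero_of_mem_Ico {x y : ℝ} (hx : x ∈ Ico 0 π) (hy : y ∈ Ico 0 π)
    (hne : x ≠ y) : sin (x - y) ≠ 0 := by
  rw [Ne, sin_eq_zero_iff_of_lt_of_lt (by linarith [hx.1, hy.2]) (by linarith [hx.2, hy.1])]
  exact sub_ne_zero.2 hne

theorem integral_abs_sin_sub (y : ℝ) : ∫ x in (0)..π, |sin (y - x)| = 2 := by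
  have hper : Function.Periodic (fun x => |sin x|) π := fun x => by simp [sin_add_pi]
  have hshift := hper.intervalIntegral_add_eq (y - π) 0
  rw [sub_add_cancel, zero_add] at hshift
  rw [intervalIntegral.integral_comp_sub_left (fun x => |sin x|) y, sub_zero, hshift,
    intervalIntegral.integral_congr fun x hx => abs_of_nonneg <|
      sin_nonneg_of_nonneg_of_le_pi (uIcc_of_le pi_pos.le ▸ hx).1 (uIcc_of_le pi_pos.le ▸ hx).2]
  simp only [integral_sin, cos_zero, cos_pi]
  norm_num

theorem lintegral_Ico_abs_sin_sub (y : ℝ) :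
    ∫⁻ x in Ico 0 π, ENNReal.ofReal |sin (y - x)| = ENNReal.ofReal 2 := by
  have hcont : Continuous fun x => |sin (y - x)| := by fun_prop
  rw [Measure.restrict_congr_set Ico_ae_eq_Ioc, ← ofReal_integral_eq_lintegral_ofReal
      hcont.integrableOn_Ioc (.of_forall fun _ => abs_nonneg _),
    ← intervalIntegral.integral_of_le pi_pos.le, integral_abs_sin_sub]

theorem lintegral_Ico_prod_Ico_abs_sin_sub :
    ∫⁻ φ in Ico 0 π ×ˢ Ico 0 π, ENNReal.ofReal |sin (φ.1 - φ.2)| = ENNReal.ofReal (2 * π) := by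
  rw [Measure.volume_eq_prod, ← Measure.prod_restrict,
    lintegral_prod _ (by fun_prop : Measurable fun φ : ℝ × ℝ =>
      ENNReal.ofReal |sin (φ.1 - φ.2)|).aemeasurable]
  simp only [lintegral_Ico_abs_sin_sub, lintegral_const, Measure.restrict_apply_univ,
    Real.volume_Ico, sub_zero, ← ENNReal.ofReal_mul zero_le_two]

theorem volume_diagonal : volume {p : ℝ × ℝ | p.1 = p.2} = 0 := by
  rw [Measure.volume_eq_prod,
    Measure.prod_apply (isClosed_eq continuous_fst continuous_snd).measurableSet]
  have hfibre (a : ℝ) : Prod.mk a ⁻¹' {p : ℝ × ℝ | p.1 = p.2} = {a} := by ext; simp [eq_comm]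
  simp [hfibre]

theorem measure_prod_setOf_mem_image_linearMap {E F : Type*} [MeasurableSpace E]
    [StandardBorelSpace E] [NormedAddCommGroup F] [NormedSpace ℝ F] [FiniteDimensional ℝ F]
    [MeasurableSpace F] [BorelSpace F] (μ : Measure E) [SFinite μ] (ν : Measure F)
    [ν.IsAddHaarMeasure] (L : E → F →ₗ[ℝ] F) (hL : Measurable fun x : E × F => L x.1 x.2)
    {D : Set E} (hD : MeasurableSet D) (hinj : ∀ φ ∈ D, Function.Injective (L φ))
    {A : Set F} (hA : MeasurableSet A) :
    μ.prod ν {x | x.1 ∈ D ∧ x.2 ∈ L x.1 '' A}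
      = ∫⁻ φ in D, ENNReal.ofReal |LinearMap.det (L φ)| * ν A ∂μ := by
  have himage : {x : E × F | x.1 ∈ D ∧ x.2 ∈ L x.1 '' A}
      = (fun x : E × F => (x.1, L x.1 x.2)) '' (D ×ˢ A) := by
    ext ⟨φ, y⟩
    simp only [mem_ofPred_eq, mem_image, mem_prod, Prod.mk.injEq, Prod.exists]
    constructor
    · rintro ⟨hφ, p, hp, rfl⟩
      exact ⟨φ, p, ⟨hφ, hp⟩, rfl, rfl⟩
    · rintro ⟨φ, p, ⟨hφ, hp⟩, rfl, rfl⟩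
      exact ⟨hφ, p, hp, rfl⟩
  have hmeas : MeasurableSet {x : E × F | x.1 ∈ D ∧ x.2 ∈ L x.1 '' A} := by
    rw [himage]
    refine (hD.prod hA).image_of_measurable_injOn (measurable_fst.prodMk hL) ?_
    rintro ⟨φ, p⟩ ⟨hφ, -⟩ ⟨φ', p'⟩ - h
    simp only [Prod.mk.injEq] at h
    obtain ⟨rfl, h⟩ := h
    simp [hinj φ hφ h]
  rw [Measure.prod_apply hmeas, ← lintegral_indicator hD]
  refine lintegral_congr fun φ => ?_
  by_cases hφ : φ ∈ D
  · rw [indicator_of_mem hφ, ← Measure.addHaar_image_linearMap]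
    congr 1 with y
    simp [hφ]
  · simp [hφ]

theorem volume_setOf_mem_image_distancePair {A : Set (ℝ × ℝ)} (hA : MeasurableSet A) :
    volume {x : (ℝ × ℝ) × (ℝ × ℝ) | x.1 ∈ Ico 0 π ×ˢ Ico 0 π ∧ x.2 ∈ distancePair x.1 '' A}
      = ENNReal.ofReal (2 * π) * volume A := by
  -- Over parallel angles the fibre is a projection of `A` and need not be measurable, so the
  -- set is compared with its off-diagonal part, which differs from it by a null set.
  set D := Ico 0 π ×ˢ Ico 0 π \ {φ : ℝ × ℝ | φ.1 = φ.2}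
  have hoff : volume {x : (ℝ × ℝ) × (ℝ × ℝ) | x.1 ∈ D ∧ x.2 ∈ distancePair x.1 '' A}
      = ENNReal.ofReal (2 * π) * volume A := by
    have hL : Measurable fun x : (ℝ × ℝ) × (ℝ × ℝ) => distancePair x.1 x.2 := by
      simp_rw [distancePair_apply]; fun_prop
    have hD : MeasurableSet D := (measurableSet_Ico.prod measurableSet_Ico).diff
      (isClosed_eq continuous_fst continuous_snd).measurableSet
    have hinj (φ) (hφ : φ ∈ D) : Function.Injective (distancePair φ) :=
      injective_distancePair (sin_sub_ne_zero_of_mem_Ico hφ.1.1 hφ.1.2 hφ.2)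
    rw [Measure.volume_eq_prod, measure_prod_setOf_mem_image_linearMap _ _ _ hL hD hinj hA]
    simp_rw [det_distancePair]
    rw [lintegral_mul_const _ (by fun_prop), setLIntegral_congr
      (sdiff_ae_eq_self.2 (measure_mono_null inter_subset_right volume_diagonal)),
      lintegral_Ico_prod_Ico_abs_sin_sub]
  have hdiag : volume ({φ : ℝ × ℝ | φ.1 = φ.2} ×ˢ (univ : Set (ℝ × ℝ))) = 0 := by
    rw [Measure.volume_eq_prod, Measure.prod_prod, volume_diagonal, zero_mul]
  rw [← hoff]
  refine le_antisymm (measure_mono_ae (ae_le_set.2 (measure_mono_null ?_ hdiag)))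
    (measure_mono fun x hx => ⟨hx.1.1, hx.2⟩)
  rintro x ⟨⟨hx, hxA⟩, hx_off⟩
  by_contra hne
  exact hx_off ⟨⟨hx, hne ∘ fun h => ⟨h, trivial⟩⟩, hxA⟩

/-- The product kinematic measure of pairs of lines whose intersection point lies
in a Borel set `A ⊆ ℝ²` equals `2π · Area(A)`. Lines are parametrized by
`(φ,ρ) ∈ [0,π) × ℝ` with Lebesgue measure; the point `p` lies on the line `(φ,ρ)`
iff `p.1 * sin φ + p.2 * cos φ = ρ`. -/
theorem stmt9 (A : Set (ℝ × ℝ)) (hA : MeasurableSet A) :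
    volume {q : (ℝ × ℝ) × (ℝ × ℝ) |
        q.1.1 ∈ Set.Ico (0:ℝ) π ∧ q.2.1 ∈ Set.Ico (0:ℝ) π ∧
        ∃ p ∈ A, p.1 * Real.sin q.1.1 + p.2 * Real.cos q.1.1 = q.1.2 ∧
                 p.1 * Real.sin q.2.1 + p.2 * Real.cos q.2.1 = q.2.2}
      = ENNReal.ofReal (2 * π) * volume A := by
  have hS : {q : (ℝ × ℝ) × (ℝ × ℝ) |
        q.1.1 ∈ Set.Ico (0:ℝ) π ∧ q.2.1 ∈ Set.Ico (0:ℝ) π ∧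
        ∃ p ∈ A, p.1 * Real.sin q.1.1 + p.2 * Real.cos q.1.1 = q.1.2 ∧
                 p.1 * Real.sin q.2.1 + p.2 * Real.cos q.2.1 = q.2.2}
      = MeasurableEquiv.prodProdProdComm ℝ ℝ ℝ ℝ ⁻¹'
        {x | x.1 ∈ Ico 0 π ×ˢ Ico 0 π ∧ x.2 ∈ distancePair x.1 '' A} := by
    ext q
    simp [distancePair_apply, MeasurableEquiv.prodProdProdComm, Prod.ext_iff, and_assoc]
  have hcomm : MeasurePreserving (MeasurableEquiv.prodProdProdComm ℝ ℝ ℝ ℝ) volume volume :=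
    measurePreserving_prodProdProdComm volume volume volume volume
  rw [hS, hcomm.measure_preimage_equiv, volume_setOf_mem_image_distancePair hA]
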